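/- arXiv:2007.05852 — 2 statements merged into one kernel-verified Lean document; each statement's English description precedes it below -/
import Mathlib

section
/- Let f₁, ..., f_m : 2^V → ℝ≥0 be monotone submodular functions, and let S* ⊆ V be any set of size l. Let S_tr^(0) = ∅ ⊆ S_tr^(1) ⊆ ... ⊆ S_tr^(l) be greedy iterates where at each step t the element e maximizing Σᵢ (fᵢ(S_tr^(t-1) ∪ {e}) - fᵢ(S_tr^(t-1))) is added. Then for any sets S₁*, ..., S_m* ⊆ V, Σᵢ fᵢ(S* ∪ Sᵢ*) - Σᵢ fᵢ(S_tr^(l)) ≤ Σᵢ fᵢ(S_tr^(l) ∪ Sᵢ*). -/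
/-!
Write `G` for the last greedy set and `g = ∑ᵢ fᵢ`. For each `i`, monotonicity and submodularity
give `fᵢ(S* ∪ Sᵢ*) ≤ fᵢ(G ∪ Sᵢ*) + ∑_{e ∈ S*} Δfᵢ(e | G)`, where `Δ` is the marginal gain.
Summing over `i`, it remains to bound `∑_{e ∈ S*} Δg(e | G)` by `g(G)`. By submodularity and the
greedy choice, every `Δg(e | G)` is at most each greedy increment `g(S_{t+1}) - g(S_t)`, `t < l`;
since `|S*| = l`, the sum is at most the telescoping sum of the `l` increments,
`g(G) - g(S₀) ≤ g(G)`.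
-/

open Finset

def Submodular {V : Type*} [DecidableEq V] (f : Finset V → ℝ) : Prop :=
  ∀ A B : Finset V, f (A ∪ B) + f (A ∩ B) ≤ f A + f B

def MonotoneSet {V : Type*} (f : Finset V → ℝ) : Prop :=
  ∀ A B : Finset V, A ⊆ B → f A ≤ f B

theorem Finset.sum_le_sum_of_forall_le_of_card_eq {α β M : Type*} [AddCommMonoid M]
    [LinearOrder M] [IsOrderedAddMonoid M] {s : Finset α} {t : Finset β} {f : α → M} {g : β → M}
    (hcard : #s = #t) (hle : ∀ a ∈ s, ∀ b ∈ t, f a ≤ g b) :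
    ∑ a ∈ s, f a ≤ ∑ b ∈ t, g b := by
  obtain rfl | ht := t.eq_empty_or_nonempty
  · simp [card_eq_zero.mp hcard]
  obtain ⟨b₀, hb₀, hmin⟩ := t.exists_min_image g ht
  calc ∑ a ∈ s, f a ≤ #s • g b₀ := sum_le_card_nsmul s f _ fun a ha => hle a ha b₀ hb₀
    _ = #t • g b₀ := by rw [hcard]
    _ ≤ ∑ b ∈ t, g b := card_nsmul_le_sum t g _ hmin

theorem MonotoneSet.sum {V ι : Type*} {s : Finset ι} {f : ι → Finset V → ℝ}
    (hf : ∀ i ∈ s, MonotoneSet (f i)) : MonotoneSet (fun S => ∑ i ∈ s, f i S) :=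
  fun A B hAB => sum_le_sum fun i hi => hf i hi A B hAB

section SetFunction

variable {V : Type*} [DecidableEq V]

def marginalGain (g : Finset V → ℝ) (e : V) (A : Finset V) : ℝ :=
  g (insert e A) - g A

theorem marginalGain_sum {ι : Type*} (s : Finset ι) (f : ι → Finset V → ℝ) (e : V)
    (A : Finset V) :
    marginalGain (fun S => ∑ i ∈ s, f i S) e A = ∑ i ∈ s, marginalGain (f i) e A :=
  (sum_sub_distrib ..).symm

theorem Submodular.sum {ι : Type*} {s : Finset ι} {f : ι → Finset V → ℝ}
    (hf : ∀ i ∈ s, Submodular (f i)) : Submodular (fun S => ∑ i ∈ s, f i S) := by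
  intro A B
  simp only [← sum_add_distrib]
  exact sum_le_sum fun i hi => hf i hi A B

variable {g : Finset V → ℝ}

theorem Submodular.marginalGain_antitone (hs : Submodular g) (hm : MonotoneSet g)
    {A B : Finset V} (hAB : A ⊆ B) (e : V) : marginalGain g e B ≤ marginalGain g e A := by
  unfold marginalGain
  by_cases he : e ∈ B
  · rw [insert_eq_of_mem he]
    linarith [hm A (insert e A) (subset_insert e A)]
  · have hunion : insert e A ∪ B = insert e B := by rw [insert_union, union_eq_right.2 hAB]
    have hinter : insert e A ∩ B = A := by
      rw [insert_inter_of_notMem he, inter_eq_left.2 hAB]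
    have := hs (insert e A) B
    rw [hunion, hinter] at this
    linarith

theorem Submodular.le_add_sum_marginalGain (hs : Submodular g) (hm : MonotoneSet g)
    (A B : Finset V) : g (A ∪ B) ≤ g B + ∑ e ∈ A, marginalGain g e B := by
  induction A using Finset.induction_on with
  | empty => simp
  | @insert a A ha ih =>
    have := hs.marginalGain_antitone hm (subset_union_right : B ⊆ A ∪ B) a
    rw [sum_insert ha, insert_union]
    unfold marginalGain at *
    linarith

theorem Submodular.union_le_add_sum_marginalGain (hs : Submodular g) (hm : MonotoneSet g)
    (A B C : Finset V) : g (A ∪ C) ≤ g (B ∪ C) + ∑ e ∈ A, marginalGain g e B :=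
  calc g (A ∪ C) ≤ g (A ∪ (B ∪ C)) := hm _ _ (union_subset_union_right subset_union_right)
    _ ≤ g (B ∪ C) + ∑ e ∈ A, marginalGain g e (B ∪ C) := hs.le_add_sum_marginalGain hm _ _
    _ ≤ g (B ∪ C) + ∑ e ∈ A, marginalGain g e B := by
      gcongr with e
      exact hs.marginalGain_antitone hm subset_union_left e

end SetFunction

section Greedy

variable {V : Type*} [DecidableEq V] {g : Finset V → ℝ} {S : ℕ → Finset V} {l : ℕ}

def IsGreedyChain (g : Finset V → ℝ) (S : ℕ → Finset V) (l : ℕ) : Prop :=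
  ∀ t < l, ∃ e, S (t + 1) = insert e (S t) ∧
    ∀ e', marginalGain g e' (S t) ≤ marginalGain g e (S t)

theorem IsGreedyChain.monotoneOn (hS : IsGreedyChain g S l) : MonotoneOn S (Set.Iic l) := by
  refine monotoneOn_of_le_add_one Set.ordConnected_Iic fun t _ _ ht => ?_
  obtain ⟨e, hins, -⟩ := hS t (Nat.lt_of_succ_le ht)
  exact hins ▸ subset_insert e (S t)

theorem IsGreedyChain.marginalGain_le (hS : IsGreedyChain g S l) (hs : Submodular g)
    (hm : MonotoneSet g) {t : ℕ} (ht : t < l) (e : V) :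
    marginalGain g e (S l) ≤ g (S (t + 1)) - g (S t) := by
  obtain ⟨e₀, hins, hmax⟩ := hS t ht
  have hsub : S t ⊆ S l := hS.monotoneOn (Set.mem_Iic.2 ht.le) (Set.mem_Iic.2 le_rfl) ht.le
  calc marginalGain g e (S l) ≤ marginalGain g e (S t) := hs.marginalGain_antitone hm hsub e
    _ ≤ marginalGain g e₀ (S t) := hmax e
    _ = g (S (t + 1)) - g (S t) := by rw [hins, marginalGain]

theorem IsGreedyChain.sum_marginalGain_le (hS : IsGreedyChain g S l) (hs : Submodular g)
    (hm : MonotoneSet g) {A : Finset V} (hA : #A = l) :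
    ∑ e ∈ A, marginalGain g e (S l) ≤ g (S l) - g (S 0) := by
  rw [← sum_range_sub (fun t => g (S t))]
  refine sum_le_sum_of_forall_le_of_card_eq (by rw [hA, card_range]) fun e _ t ht => ?_
  exact hS.marginalGain_le hs hm (mem_range.1 ht) e

end Greedy

theorem greedy_sum_coupling_general {V : Type*} [DecidableEq V] (m l : ℕ)
    (f : Fin m → Finset V → ℝ)
    (hnonneg : ∀ i S, 0 ≤ f i S)
    (hsub : ∀ i, Submodular (f i)) (hmono : ∀ i, MonotoneSet (f i))
    (Str : ℕ → Finset V)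
    (hstep : ∀ t < l, ∃ e, e ∉ Str t ∧ Str (t + 1) = insert e (Str t) ∧
      ∀ e', (∑ i, (f i (insert e' (Str t)) - f i (Str t))) ≤
        ∑ i, (f i (insert e (Str t)) - f i (Str t)))
    (Sstar : Finset V) (hSstar : Sstar.card = l)
    (Sistar : Fin m → Finset V) :
    (∑ i, f i (Sstar ∪ Sistar i)) - (∑ i, f i (Str l)) ≤
      ∑ i, f i (Str l ∪ Sistar i) := by
  set g : Finset V → ℝ := fun S => ∑ i, f i S
  have hgain_sum : ∀ e A, marginalGain g e A = ∑ i, marginalGain (f i) e A :=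
    fun e A => marginalGain_sum univ f e A
  have hgs : Submodular g := Submodular.sum fun i _ => hsub i
  have hgm : MonotoneSet g := MonotoneSet.sum fun i _ => hmono i
  have hgreedy : IsGreedyChain g Str l := fun t ht => by
    obtain ⟨e, -, hins, hmax⟩ := hstep t ht
    exact ⟨e, hins, fun e' => by simp only [hgain_sum]; exact hmax e'⟩
  have hsplit : ∑ i, f i (Sstar ∪ Sistar i) ≤
      ∑ i, f i (Str l ∪ Sistar i) + ∑ e ∈ Sstar, marginalGain g e (Str l) := by
    simp only [hgain_sum, sum_comm (s := Sstar), ← sum_add_distrib]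
    exact sum_le_sum fun i _ => (hsub i).union_le_add_sum_marginalGain (hmono i) _ _ _
  have hgain := hgreedy.sum_marginalGain_le hgs hgm hSstar
  have hstart : 0 ≤ g (Str 0) := sum_nonneg fun i _ => hnonneg i _
  linarith

/-- the key coupling inequality for the greedy sequence built on the
sum of the `fᵢ`'s (equation (13) of the paper). -/
theorem greedy_sum_coupling {V : Type*} [Fintype V] [DecidableEq V] (m l : ℕ)
    (f : Fin m → Finset V → ℝ)
    (hnonneg : ∀ i S, 0 ≤ f i S)
    (hsub : ∀ i, Submodular (f i)) (hmono : ∀ i, MonotoneSet (f i))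
    (Str : ℕ → Finset V) (h0 : Str 0 = ∅)
    (hstep : ∀ t < l, ∃ e, e ∉ Str t ∧ Str (t + 1) = insert e (Str t) ∧
      ∀ e', (∑ i, (f i (insert e' (Str t)) - f i (Str t))) ≤
        ∑ i, (f i (insert e (Str t)) - f i (Str t)))
    (Sstar : Finset V) (hSstar : Sstar.card = l)
    (Sistar : Fin m → Finset V) :
    (∑ i, f i (Sstar ∪ Sistar i)) - (∑ i, f i (Str l)) ≤
      ∑ i, f i (Str l ∪ Sistar i) :=
  greedy_sum_coupling_general m l f hnonneg hsub hmono Str hstep Sstar hSstar Sistar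
end

section
/- Let f₁, ..., f_m : 2^V → ℝ≥0 be monotone submodular, and let S_tr*, {Sᵢ*} be an optimal solution to the meta-learning problem with value OPT. Suppose that θ₂ = Σᵢ fᵢ(S_tr^(2) ∪ Sᵢ^(2)) is the value of Algorithm 2's output and γ = Σᵢ fᵢ(Sᵢ^(2)). If S_tr^(2) is chosen greedily in Algorithm 2, then OPT - (θ₂ - γ)/(1 - 1/e) - γ ≤ Σᵢ [fᵢ(Sᵢ^(2) ∪ Sᵢ*) - fᵢ(Sᵢ^(2))]. -/
open Finset

/-! For each task `i`, submodularity applied to `S_tr* ∪ Sᵢ` and `Sᵢ ∪ Sᵢ*` gives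
`fᵢ(S_tr* ∪ Sᵢ*) ≤ fᵢ(S_tr* ∪ Sᵢ) + (fᵢ(Sᵢ ∪ Sᵢ*) - fᵢ(Sᵢ))`. Summing over `i` bounds `OPT` by
`Σᵢ fᵢ(S_tr* ∪ Sᵢ)` plus the right-hand side, and the greedy guarantee at `S' = S_tr*` bounds
`Σᵢ fᵢ(S_tr* ∪ Sᵢ)` by `(θ₂ - γ)/(1 - 1/e) + γ`. -/

theorem Submodular.apply_union_le_of_monotoneSet {V : Type*} [DecidableEq V]
    {f : Finset V → ℝ} (hsub : Submodular f) (hmono : MonotoneSet f) (A B C : Finset V) :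
    f (A ∪ C) ≤ f (A ∪ B) + (f (B ∪ C) - f B) := by
  have hunion : f (A ∪ C) ≤ f ((A ∪ B) ∪ (B ∪ C)) :=
    hmono _ _ (union_subset_union subset_union_left subset_union_right)
  have hinter : f B ≤ f ((A ∪ B) ∩ (B ∪ C)) :=
    hmono _ _ (subset_inter subset_union_right subset_union_left)
  linarith [hsub (A ∪ B) (B ∪ C)]

theorem one_sub_one_div_exp_one_pos : 0 < 1 - 1 / Real.exp 1 := by
  have : 1 / Real.exp 1 < 1 := by
    rw [div_lt_one (Real.exp_pos 1)]
    exact Real.one_lt_exp_iff.mpr one_pos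
  linarith

theorem alg2_cross_bound_general {V : Type*} [DecidableEq V]
    (m l : ℕ)
    (f : Fin m → Finset V → ℝ)
    (hsub : ∀ i, Submodular (f i)) (hmono : ∀ i, MonotoneSet (f i))
    -- optimal solution
    (Strstar : Finset V) (hStrstar : Strstar.card ≤ l)
    (Sistar : Fin m → Finset V)
    (OPT : ℝ) (hOPTval : OPT = ∑ i, f i (Strstar ∪ Sistar i))
    -- output of Algorithm 2
    (S2 : Fin m → Finset V)
    (θ₂ γ : ℝ)
    -- greedy guarantee of phase 2 of Algorithm 2
    (hgreedy : ∀ S' : Finset V, S'.card ≤ l →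
      (1 - 1 / Real.exp 1) * ((∑ i, f i (S' ∪ S2 i)) - γ) ≤ θ₂ - γ) :
    OPT - (θ₂ - γ) / (1 - 1 / Real.exp 1) - γ ≤
      ∑ i, (f i (S2 i ∪ Sistar i) - f i (S2 i)) := by
  have hOPT_le :
      OPT ≤ ∑ i, f i (Strstar ∪ S2 i) + ∑ i, (f i (S2 i ∪ Sistar i) - f i (S2 i)) := by
    rw [hOPTval, ← sum_add_distrib]
    exact sum_le_sum fun i _ => (hsub i).apply_union_le_of_monotoneSet (hmono i) _ _ _
  have hgreedy_star : ∑ i, f i (Strstar ∪ S2 i) - γ ≤ (θ₂ - γ) / (1 - 1 / Real.exp 1) :=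
    (le_div_iff₀ one_sub_one_div_exp_one_pos).mpr <| by
      linarith [hgreedy Strstar hStrstar]
  linarith

/-- inequality (34) in the proof of Theorem 1. -/
theorem alg2_cross_bound {V : Type*} [Fintype V] [DecidableEq V]
    (m k l : ℕ) (hlk : l ≤ k)
    (f : Fin m → Finset V → ℝ)
    (hnonneg : ∀ i S, 0 ≤ f i S)
    (hsub : ∀ i, Submodular (f i)) (hmono : ∀ i, MonotoneSet (f i))
    -- optimal solution
    (Strstar : Finset V) (hStrstar : Strstar.card ≤ l)
    (Sistar : Fin m → Finset V) (hSistar : ∀ i, (Sistar i).card ≤ k - l)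
    (OPT : ℝ) (hOPTval : OPT = ∑ i, f i (Strstar ∪ Sistar i))
    (hOPT : ∀ (Str' : Finset V) (S' : Fin m → Finset V), Str'.card ≤ l →
      (∀ i, (S' i).card ≤ k - l) → (∑ i, f i (Str' ∪ S' i)) ≤ OPT)
    -- output of Algorithm 2
    (Str2 : Finset V) (hStr2card : Str2.card ≤ l)
    (S2 : Fin m → Finset V) (hS2card : ∀ i, (S2 i).card ≤ k - l)
    (θ₂ γ : ℝ)
    (hθ₂ : θ₂ = ∑ i, f i (Str2 ∪ S2 i))
    (hγ : γ = ∑ i, f i (S2 i))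
    -- greedy guarantee of phase 2 of Algorithm 2
    (hgreedy : ∀ S' : Finset V, S'.card ≤ l →
      (1 - 1 / Real.exp 1) * ((∑ i, f i (S' ∪ S2 i)) - γ) ≤ θ₂ - γ) :
    OPT - (θ₂ - γ) / (1 - 1 / Real.exp 1) - γ ≤
      ∑ i, (f i (S2 i ∪ Sistar i) - f i (S2 i)) :=
  alg2_cross_bound_general m l f hsub hmono Strstar hStrstar Sistar OPT hOPTval S2 θ₂ γ hgreedy
end
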